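/- For a cyclic k-module M with face maps δ_i, degeneracies σ_i and cyclic operators t_n, the Connes boundary operator B_n = (t_{n+1}^{-1} + (-1)^n) ∘ σ_n^n ∘ (Σ_{i=0}^n (-1)^{in} t_n^i) satisfies B_{n+1} ∘ B_n = 0. -/
import Mathlib


open scoped BigOperators

/-- A cyclic `k`-module: `k`-modules `M n`, face maps `δ n i : M (n+1) → M n`
(meaningful for `i ≤ n+1`), degeneracies `σ n i : M n → M (n+1)` (meaningful
for `i ≤ n`), and invertible cyclic operators `t n : M n ≃ M n`, satisfying the
standard simplicial and cyclic identities. -/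
structure CyclicModuleStr (k : Type*) [CommRing k] (M : ℕ → Type*)
    [∀ n, AddCommGroup (M n)] [∀ n, Module k (M n)] where
  δ : ∀ n : ℕ, ℕ → (M (n + 1) →ₗ[k] M n)
  σ : ∀ n : ℕ, ℕ → (M n →ₗ[k] M (n + 1))
  t : ∀ n : ℕ, M n ≃ₗ[k] M n
  /-- simplicial identity for faces: `d_i ∘ d_j = d_{j-1} ∘ d_i` for `i < j` -/
  face_face : ∀ n i j, i < j → j ≤ n + 2 →
    (δ n i).comp (δ (n + 1) j) = (δ n (j - 1)).comp (δ (n + 1) i)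
  /-- simplicial identity for degeneracies: `s_i ∘ s_j = s_{j+1} ∘ s_i` for `i ≤ j` -/
  degen_degen : ∀ n i j, i ≤ j → j ≤ n →
    (σ (n + 1) i).comp (σ n j) = (σ (n + 1) (j + 1)).comp (σ n i)
  /-- `d_i ∘ s_j = s_{j-1} ∘ d_i` for `i < j` -/
  face_degen_lt : ∀ n i j, i < j → j ≤ n + 1 →
    (δ (n + 1) i).comp (σ (n + 1) j) = (σ n (j - 1)).comp (δ n i)
  /-- `d_i ∘ s_j = id` for `i = j` or `i = j + 1` -/
  face_degen_eq : ∀ n i j, (i = j ∨ i = j + 1) → j ≤ n →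
    (δ n i).comp (σ n j) = LinearMap.id
  /-- `d_i ∘ s_j = s_j ∘ d_{i-1}` for `i > j + 1` -/
  face_degen_gt : ∀ n i j, j + 1 < i → i ≤ n + 2 →
    (δ (n + 1) i).comp (σ (n + 1) j) = (σ n j).comp (δ n (i - 1))
  /-- `t_n^{n+1} = id` -/
  t_order : ∀ n, (t n) ^ (n + 1) = 1
  /-- `d_i ∘ t = t ∘ d_{i-1}` for `1 ≤ i ≤ n + 1` -/
  face_t : ∀ n i, 1 ≤ i → i ≤ n + 1 →
    (δ n i).comp (t (n + 1)).toLinearMap = (t n).toLinearMap.comp (δ n (i - 1))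
  /-- `d_0 ∘ t = d_{n+1}` -/
  face_t_zero : ∀ n, (δ n 0).comp (t (n + 1)).toLinearMap = δ n (n + 1)
  /-- `s_i ∘ t = t ∘ s_{i-1}` for `1 ≤ i ≤ n` -/
  degen_t : ∀ n i, 1 ≤ i → i ≤ n →
    (σ n i).comp (t n).toLinearMap = (t (n + 1)).toLinearMap.comp (σ n (i - 1))
  /-- `s_0 ∘ t = t² ∘ s_n` -/
  degen_t_zero : ∀ n,
    (σ n 0).comp (t n).toLinearMap
      = ((t (n + 1)).toLinearMap ∘ₗ (t (n + 1)).toLinearMap).comp (σ n n)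

/-- Connes' operator `B_n = (t_{n+1}^{-1} + (-1)^n) ∘ σ_n^n ∘ (Σ_{i=0}^n (-1)^{i n} t_n^i)`. -/
def CyclicModuleStr.B {k : Type*} [CommRing k] {M : ℕ → Type*}
    [∀ n, AddCommGroup (M n)] [∀ n, Module k (M n)]
    (X : CyclicModuleStr k M) (n : ℕ) : M n →ₗ[k] M (n + 1) :=
  ((X.t (n + 1)).symm.toLinearMap + ((-1 : ℤ) ^ n) • LinearMap.id) ∘ₗ
    (X.σ n n) ∘ₗ
      (∑ i ∈ Finset.range (n + 1), ((-1 : ℤ) ^ (i * n)) • ((X.t n).toLinearMap ^ i))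

-- Auxiliary: coercion of a power of a linear equivalence to a linear map.
lemma linEquiv_coe_pow {k M : Type*} [CommRing k] [AddCommGroup M] [Module k M]
    (e : M ≃ₗ[k] M) (m : ℕ) :
    ((e ^ m : M ≃ₗ[k] M) : M →ₗ[k] M) = (e : M →ₗ[k] M) ^ m := by
  induction m with
  | zero => rfl
  | succ i ih => rw [pow_succ, pow_succ, ← ih]; rfl

/-- for a cyclic `k`-module, `B_{n+1} ∘ B_n = 0`. -/
theorem connes_B_squared_zero {k : Type*} [CommRing k] {M : ℕ → Type*}
    [∀ n, AddCommGroup (M n)] [∀ n, Module k (M n)]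
    (X : CyclicModuleStr k M) (n : ℕ) :
    (X.B (n + 1)).comp (X.B n) = 0 := by
  -- Notation in the endomorphism ring of `M (n+1)`
  set T : Module.End k (M (n + 1)) := (X.t (n + 1)).toLinearMap with hTdef
  set S : Module.End k (M (n + 1)) := (X.t (n + 1)).symm.toLinearMap with hSdef
  have hTS : T * S = 1 := by
    ext x; simp [hTdef, hSdef, Module.End.mul_apply]
  have hT : T ^ (n + 2) = 1 := by
    have h := X.t_order (n + 1)
    have h2 : ((X.t (n + 1)) ^ (n + 2) : M (n + 1) ≃ₗ[k] M (n + 1)).toLinearMap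
        = T ^ (n + 2) := linEquiv_coe_pow _ _
    rw [h] at h2
    exact h2.symm.trans rfl
  -- the twisted cyclic operator
  set u : Module.End k (M (n + 1)) := ((-1 : ℤ) ^ (n + 1)) • T with hudef
  have hu : u ^ (n + 2) = 1 := by
    rw [hudef, smul_pow, ← pow_mul, hT]
    have hev : Even ((n + 1) * (n + 2)) := Nat.even_mul_succ_self (n + 1)
    rw [hev.neg_one_pow, one_smul]
  -- the norm sum in `B (n+1)` is the geometric sum of `u`
  have hNorm : (∑ i ∈ Finset.range (n + 1 + 1),
        ((-1 : ℤ) ^ (i * (n + 1))) • (T ^ i))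
      = ∑ i ∈ Finset.range (n + 2), u ^ i := by
    refine Finset.sum_congr rfl fun i _ => ?_
    rw [hudef, smul_pow, ← pow_mul, Nat.mul_comm (n + 1) i]
  -- the first factor of `B n` factors through `1 - u`
  have hP : S + ((-1 : ℤ) ^ n) • (1 : Module.End k (M (n + 1))) = (1 - u) * S := by
    rw [sub_mul, one_mul, hudef, smul_mul_assoc, hTS]
    have : ((-1 : ℤ) ^ n : ℤ) = -((-1 : ℤ) ^ (n + 1)) := by ring
    rw [this, neg_smul, sub_eq_add_neg]
  -- hence the norm sum kills the first factor of `B n`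
  have key : (∑ i ∈ Finset.range (n + 1 + 1),
        ((-1 : ℤ) ^ (i * (n + 1))) • (T ^ i))
      * (S + ((-1 : ℤ) ^ n) • (1 : Module.End k (M (n + 1)))) = 0 := by
    rw [hNorm, hP, ← mul_assoc, geom_sum_mul_neg, hu, sub_self, zero_mul]
  -- conclude by a pointwise computation
  ext m
  simp only [CyclicModuleStr.B, LinearMap.comp_apply, LinearMap.zero_apply]
  have hpt := LinearMap.congr_fun key
      ((X.σ n n) ((∑ i ∈ Finset.range (n + 1),
        ((-1 : ℤ) ^ (i * n)) • ((X.t n).toLinearMap ^ i)) m))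
  simp only [Module.End.mul_apply, LinearMap.zero_apply] at hpt
  have hid : (S + ((-1 : ℤ) ^ n) • (1 : Module.End k (M (n + 1))))
      = ((X.t (n + 1)).symm.toLinearMap + ((-1 : ℤ) ^ n) • LinearMap.id) := rfl
  rw [hid] at hpt
  rw [hpt]
  simp only [map_zero]
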